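/- arXiv:1909.01094 — 4 statements merged into one kernel-verified Lean document; each statement's English description precedes it below -/
import Mathlib

section
/- Let K be a field, G = ⟨x⟩ an infinite cyclic group, and B = K[x, x⁻¹] the Laurent polynomial ring (the group algebra KG). If A is a K-subspace of B such that A/(A ∩ Ax) and A/(A ∩ Ax⁻¹) are finite-dimensional (i.e., A is G-almost invariant), then A is almost equal to one of the four subspaces 0, K[x], K[x⁻¹], B, where two subspaces U, W are almost equal if both U/(U ∩ W) and W/(U ∩ W) are finite-dimensional. -/
open LaurentPolynomial

/-- Two subspaces `U`, `W` are almost equal if `U/(U∩W)` and `W/(U∩W)` are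
finite-dimensional. -/
def AlmostEqual {K V : Type*} [Field K] [AddCommGroup V] [Module K V]
    (U W : Submodule K V) : Prop :=
  FiniteDimensional K (U ⧸ (U ⊓ W).comap U.subtype) ∧
    FiniteDimensional K (W ⧸ (U ⊓ W).comap W.subtype)

/-!
Write `P = K[x]` and `Q = K[x⁻¹]`, and use that `A·x` is almost contained in `A`.

If `A ∩ P` is infinite-dimensional, look at the set `D` of degrees of its nonzero elements. An
echelon argument shows that a finite-dimensional enlargement of a subspace creates only finitely
many new degrees, so `n ∈ D` implies `n + 1 ∈ D` for all but finitely many `n`. As `D` is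
unbounded, it contains a whole ray `[n₀, ∞)`, and then `P ⊆ (A ∩ P) + span {1, …, x^(n₀-1)}`.

If `A ∩ P` is finite-dimensional, write `A·x ⊆ A + E` with `E` supported in `[a, b]`. Multiplying
by `x` and correcting by `E` moves the support of an element of `A` upwards one step at a time,
until it lands in the finite-dimensional space of elements of `A` supported in `[a, ∞)`. Hence the
degrees of all elements of `A` are bounded, and `A` is almost contained in `Q`.

The inversion `x ↦ x⁻¹` gives the same two statements with `P` and `Q` exchanged, using that
`A·x⁻¹` is almost contained in `A`; the four combinations give the four cases.
-/

open AddMonoidAlgebra Set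

section AlmostLE

open Submodule

variable {K V V' : Type*} [Field K] [AddCommGroup V] [Module K V] [AddCommGroup V'] [Module K V']
  {U W Z : Submodule K V}

def AlmostLE (U W : Submodule K V) : Prop := ∃ X : Submodule K V, X.FG ∧ U ≤ W ⊔ X

theorem AlmostLE.of_le (h : U ≤ W) : AlmostLE U W := ⟨⊥, fg_bot, le_sup_of_le_left h⟩

theorem almostLE_of_fg (hU : U.FG) : AlmostLE U W := ⟨U, hU, le_sup_right⟩

theorem AlmostLE.trans (h₁ : AlmostLE U W) (h₂ : AlmostLE W Z) : AlmostLE U Z := by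
  obtain ⟨X, hX, hUX⟩ := h₁
  obtain ⟨Y, hY, hWY⟩ := h₂
  exact ⟨Y ⊔ X, hY.sup hX, hUX.trans (by rw [← sup_assoc]; exact sup_le_sup_right hWY X)⟩

theorem AlmostLE.sup (h₁ : AlmostLE U Z) (h₂ : AlmostLE W Z) : AlmostLE (U ⊔ W) Z := by
  obtain ⟨X, hX, hUX⟩ := h₁
  obtain ⟨Y, hY, hWY⟩ := h₂
  refine ⟨X ⊔ Y, hX.sup hY, sup_le (hUX.trans ?_) (hWY.trans ?_)⟩
  · exact sup_le_sup_left le_sup_left Z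
  · exact sup_le_sup_left le_sup_right Z

theorem AlmostLE.fg (h : AlmostLE U W) (hW : W.FG) : U.FG := by
  obtain ⟨X, hX, hUX⟩ := h
  exact (hW.sup hX).of_le hUX

theorem AlmostLE.map (f : V →ₗ[K] V') (h : AlmostLE U W) : AlmostLE (U.map f) (W.map f) := by
  obtain ⟨X, hX, hUX⟩ := h
  exact ⟨X.map f, hX.map f, by rw [← Submodule.map_sup]; exact map_mono hUX⟩

theorem almostLE_iff_fg_map_mkQ : AlmostLE U W ↔ (U.map W.mkQ).FG := by
  constructor
  · rintro ⟨X, hX, hUX⟩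
    refine (hX.map W.mkQ).of_le ?_
    rw [map_le_iff_le_comap, comap_map_mkQ]
    exact hUX
  · intro h
    obtain ⟨g, hg⟩ := W.mkQ.exists_rightInverse_of_surjective W.range_mkQ
    refine ⟨(U.map W.mkQ).map g, h.map g, fun u hu => mem_sup.2 ?_⟩
    refine ⟨u - g (W.mkQ u), ?_, g (W.mkQ u), mem_map_of_mem (mem_map_of_mem hu),
      sub_add_cancel _ _⟩
    rw [← Quotient.mk_eq_zero, ← mkQ_apply, map_sub, ← LinearMap.comp_apply, hg,
      LinearMap.id_apply, sub_self]

theorem almostLE_iff_finiteDimensional :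
    AlmostLE U W ↔ FiniteDimensional K (U ⧸ (U ⊓ W).comap U.subtype) := by
  set f := W.mkQ ∘ₗ U.subtype
  have hker : LinearMap.ker f = (U ⊓ W).comap U.subtype := by
    ext x
    simp [f]
  have hrange : LinearMap.range f = U.map W.mkQ := by
    rw [LinearMap.range_comp, range_subtype]
  rw [almostLE_iff_fg_map_mkQ, ← hker, ← hrange, fg_iff_finiteDimensional]
  exact (Module.Finite.equiv_iff f.quotKerEquivRange).symm

theorem AlmostLE.inf_of_le (h : AlmostLE U W) (hUZ : U ≤ Z) : AlmostLE U (W ⊓ Z) := by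
  rw [almostLE_iff_finiteDimensional] at h ⊢
  rwa [inf_comm W, ← inf_assoc, inf_eq_left.2 hUZ]

theorem AlmostLE.inf_left (h : AlmostLE U W) (A : Submodule K V) : AlmostLE (A ⊓ U) (A ⊓ W) := by
  rw [inf_comm A W]
  exact ((AlmostLE.of_le inf_le_right).trans h).inf_of_le inf_le_left

theorem almostEqual_iff : AlmostEqual U W ↔ AlmostLE U W ∧ AlmostLE W U := by
  rw [AlmostEqual, almostLE_iff_finiteDimensional, almostLE_iff_finiteDimensional, inf_comm W U]

end AlmostLE

namespace AddMonoidAlgebra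

variable {R M : Type*} [Semiring R] {s t : Set M}

theorem supported_union : supported R R (s ∪ t) = supported R R s ⊔ supported R R t := by
  simp only [supported_eq_span_single, image_union, Submodule.span_union]

theorem supported_inter : supported R R (s ∩ t) = supported R R s ⊓ supported R R t := by
  ext p
  simp only [Submodule.mem_inf, mem_supported, subset_inter_iff]

theorem supported_univ : supported R R (univ : Set M) = ⊤ :=
  eq_top_iff.2 fun _ _ => mem_supported.2 (subset_univ _)

theorem fg_supported (hs : s.Finite) : (supported R R s).FG := by
  rw [supported_eq_span_single]
  exact Submodule.fg_span (hs.image _)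

theorem supported_almostLE {K : Type*} [Field K] (h : (s \ t).Finite) :
    AlmostLE (supported K K s) (supported K K t) := by
  refine ⟨_, fg_supported h, ?_⟩
  rw [← supported_union, union_sdiff_self]
  exact supported_mono subset_union_right

end AddMonoidAlgebra

namespace LaurentPolynomial

open Submodule LinearMap

section Supported

variable {R : Type*} [Semiring R] {s : Set ℤ}

theorem coeff_mul_T (p : R[T;T⁻¹]) (n m : ℤ) : (p * T n).coeff m = p.coeff (m - n) := by
  rw [T, coeff_mul_single_apply, mul_one, sub_eq_add_neg]

theorem mul_T_mem_supported_iff {p : R[T;T⁻¹]} {n : ℤ} :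
    p * T n ∈ supported R R s ↔ p ∈ supported R R ((· + n) ⁻¹' s) := by
  simp only [mem_supported', coeff_mul_T, mem_preimage]
  refine ⟨fun h m hm => ?_, fun h m hm => h (m - n) (by simpa using hm)⟩
  simpa using h (m + n) hm

theorem exists_le_supported_Icc {X : Submodule R R[T;T⁻¹]} (hX : X.FG) :
    ∃ a b : ℤ, X ≤ supported R R (Icc a b) := by
  classical
  obtain ⟨S, rfl⟩ := hX
  set D := S.biUnion fun p => p.coeff.support
  obtain ⟨a, ha⟩ := D.bddBelow
  obtain ⟨b, hb⟩ := D.bddAbove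
  refine ⟨a, b, span_le.2 fun p hp m hm => ?_⟩
  have hmD : m ∈ D := Finset.mem_biUnion.2 ⟨p, hp, hm⟩
  exact ⟨ha hmD, hb hmD⟩

theorem exists_mem_supported_Icc (p : R[T;T⁻¹]) : ∃ a b : ℤ, p ∈ supported R R (Icc a b) := by
  simpa only [span_singleton_le_iff_mem] using exists_le_supported_Icc (fg_span_singleton p)

theorem span_range_T_natCast :
    span R (range fun n : ℕ => (T (n : ℤ) : R[T;T⁻¹])) = supported R R (Ici 0) := by
  rw [supported_eq_span_single, ← Nat.range_cast_int, ← range_comp]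
  rfl

theorem span_range_T_neg_natCast :
    span R (range fun n : ℕ => (T (-(n : ℤ)) : R[T;T⁻¹])) = supported R R (Iic 0) := by
  rw [supported_eq_span_single, ← neg_zero, ← neg_Ici, ← Nat.range_cast_int, ← image_neg_eq_neg,
    ← range_comp, ← range_comp]
  rfl

theorem degree_eq_coe_iff {p : R[T;T⁻¹]} {n : ℤ} :
    p.degree = n ↔ p.coeff n ≠ 0 ∧ p ∈ supported R R (Iic n) := by
  rw [mem_supported', degree]
  constructor
  · intro h
    refine ⟨Finsupp.mem_support_iff.1 (Finset.mem_of_max h), fun m hm => ?_⟩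
    exact Finsupp.notMem_support_iff.1 (Finset.notMem_of_max_lt (not_le.1 hm) h)
  · rintro ⟨hn, hp⟩
    refine le_antisymm (Finset.max_le fun m hm => WithBot.coe_le_coe.2 ?_)
      (Finset.le_max (Finsupp.mem_support_iff.2 hn))
    by_contra hmn
    exact Finsupp.mem_support_iff.1 hm (hp m hmn)

theorem exists_degree_eq_coe {p : R[T;T⁻¹]} (hp : p ≠ 0) : ∃ n : ℤ, p.degree = n := by
  obtain ⟨n, hn⟩ := WithBot.ne_bot_iff_exists.1 (degree_eq_bot_iff.not.2 hp)
  exact ⟨n, hn.symm⟩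

end Supported

section Ring

variable {R : Type*} [Ring R] [NoZeroDivisors R]

theorem degree_smul_sub_smul {p q : R[T;T⁻¹]} {m n : ℤ} (hp : p.degree = m)
    (hq : q.degree = n) (hmn : m < n) {a : R} (ha : a ≠ 0) (b : R) :
    (a • q - b • p).degree = n := by
  rw [degree_eq_coe_iff] at hp hq ⊢
  have hpn : p ∈ supported R R (Iic n) := supported_mono (Iic_subset_Iic.2 hmn.le) hp.2
  refine ⟨?_, sub_mem (smul_mem _ _ hq.2) (smul_mem _ _ hpn)⟩
  simp only [coeff_sub, coeff_smul, Finsupp.sub_apply, Finsupp.smul_apply,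
    mem_supported'.1 hp.2 n (by simpa using hmn), smul_eq_mul, mul_zero, sub_zero]
  exact mul_ne_zero ha hq.1

end Ring

section Invert

variable {R : Type*} [CommSemiring R] {A : Submodule R R[T;T⁻¹]}

theorem map_invert_supported (s : Set ℤ) :
    (supported R R s).map (invert : R[T;T⁻¹] ≃ₐ[R] R[T;T⁻¹]).toLinearMap = supported R R (-s) := by
  ext p
  constructor
  · rintro ⟨q, hq, rfl⟩
    rw [SetLike.mem_coe, mem_supported'] at hq
    rw [mem_supported']
    intro m hm
    simpa using hq (-m) hm
  · intro hp
    refine ⟨invert p, ?_, involutive_invert p⟩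
    rw [mem_supported'] at hp
    rw [SetLike.mem_coe, mem_supported']
    intro m hm
    simpa using hp (-m) (by simpa using hm)

theorem map_invert_inf_supported (s : Set ℤ) :
    (A ⊓ supported R R s).map invert.toLinearMap =
      A.map invert.toLinearMap ⊓ supported R R (-s) := by
  rw [Submodule.map_inf _ invert.injective, map_invert_supported]

theorem map_invert_map_mulRight_T (n : ℤ) :
    (A.map (mulRight R (T n))).map invert.toLinearMap =
      (A.map invert.toLinearMap).map (mulRight R (T (-n))) := by
  rw [← map_comp, ← map_comp]
  congr 1
  refine LinearMap.ext fun p => ?_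
  exact (map_mul invert p (T n)).trans (congrArg _ (invert_T n))

theorem map_invert_map_invert : (A.map invert.toLinearMap).map invert.toLinearMap = A := by
  have h : (invert : R[T;T⁻¹] ≃ₐ[R] R[T;T⁻¹]).toLinearMap ∘ₗ invert.toLinearMap = LinearMap.id :=
    LinearMap.ext fun p => involutive_invert p
  rw [← map_comp, h, Submodule.map_id]

end Invert

section Degree

variable {K : Type*} [Field K]

theorem sub_smul_mem_supported_Iio {p v : K[T;T⁻¹]} {n : ℤ} (hp : p ∈ supported K K (Iic n))
    (hv : v.degree = n) : p - (p.coeff n / v.coeff n) • v ∈ supported K K (Iio n) := by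
  rw [degree_eq_coe_iff] at hv
  rw [mem_supported'] at hp ⊢
  intro m hm
  rcases (not_lt.1 (by simpa using hm)).eq_or_lt with rfl | hlt
  · simp [div_mul_cancel₀ _ hv.1]
  · simp [hp m (not_le.2 hlt), mem_supported'.1 hv.2 m (not_le.2 hlt)]

def topDegrees (U : Submodule K K[T;T⁻¹]) : Set ℤ := {n | ∃ p ∈ U, p.degree = n}

theorem topDegrees_mono {U W : Submodule K K[T;T⁻¹]} (h : U ≤ W) : topDegrees U ⊆ topDegrees W :=
  fun _ ⟨p, hp, hpn⟩ => ⟨p, h hp, hpn⟩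

theorem mem_topDegrees_of_lt {W : Submodule K K[T;T⁻¹]} {v : K[T;T⁻¹]} {m n : ℤ}
    (hm : m ∈ topDegrees (W ⊔ K ∙ v)) (hn : n ∈ topDegrees (W ⊔ K ∙ v)) (hmn : m < n)
    (hmW : m ∉ topDegrees W) : n ∈ topDegrees W := by
  obtain ⟨_, hp, hpm⟩ := hm
  obtain ⟨_, hq, hqn⟩ := hn
  obtain ⟨w, hw, _, hav, rfl⟩ := mem_sup.1 hp
  obtain ⟨w', hw', _, hbv, rfl⟩ := mem_sup.1 hq
  obtain ⟨a, rfl⟩ := mem_span_singleton.1 hav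
  obtain ⟨b, rfl⟩ := mem_span_singleton.1 hbv
  have ha : a ≠ 0 := by
    rintro rfl
    exact hmW ⟨w, hw, by simpa using hpm⟩
  -- Eliminating `v` between the two witnesses leaves an element of `W` of degree `n`.
  refine ⟨a • w' - b • w, sub_mem (smul_mem _ _ hw') (smul_mem _ _ hw), ?_⟩
  have h : a • w' - b • w = a • (w' + b • v) - b • (w + a • v) := by
    simp only [smul_add, smul_smul, mul_comm a b]
    abel
  rw [h]
  exact degree_smul_sub_smul hpm hqn hmn ha b

theorem topDegrees_sup_span_singleton_sdiff_subsingleton (W : Submodule K K[T;T⁻¹])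
    (v : K[T;T⁻¹]) : (topDegrees (W ⊔ K ∙ v) \ topDegrees W).Subsingleton := by
  rintro m ⟨hm, hmW⟩ n ⟨hn, hnW⟩
  by_contra hne
  rcases lt_or_gt_of_ne hne with hlt | hlt
  · exact hnW (mem_topDegrees_of_lt hm hn hlt hmW)
  · exact hmW (mem_topDegrees_of_lt hn hm hlt hnW)

theorem topDegrees_sup_sdiff_finite {X : Submodule K K[T;T⁻¹]} (hX : X.FG)
    (W : Submodule K K[T;T⁻¹]) : (topDegrees (W ⊔ X) \ topDegrees W).Finite := by
  induction X, hX using fg_induction generalizing W with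
  | singleton v => exact (topDegrees_sup_span_singleton_sdiff_subsingleton W v).finite
  | sup X Y _ _ hX hY =>
    refine ((hY (W ⊔ X)).union (hX W)).subset ?_
    rw [← sup_assoc]
    intro n ⟨hn, hnW⟩
    by_cases hnX : n ∈ topDegrees (W ⊔ X)
    · exact Or.inr ⟨hnX, hnW⟩
    · exact Or.inl ⟨hn, hnX⟩

theorem _root_.AlmostLE.topDegrees_sdiff_finite {U W : Submodule K K[T;T⁻¹]}
    (h : AlmostLE U W) : (topDegrees U \ topDegrees W).Finite := by
  obtain ⟨X, hX, hUX⟩ := h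
  exact (topDegrees_sup_sdiff_finite hX W).subset (sdiff_le_sdiff_right (topDegrees_mono hUX))

theorem le_supported_Iic_of_mem_upperBounds {U : Submodule K K[T;T⁻¹]} {C : ℤ}
    (hC : C ∈ upperBounds (topDegrees U)) : U ≤ supported K K (Iic C) := by
  intro p hp
  by_cases hp0 : p = 0
  · rw [hp0]
    exact zero_mem _
  obtain ⟨n, hn⟩ := exists_degree_eq_coe hp0
  exact supported_mono (Iic_subset_Iic.2 (hC ⟨p, hp, hn⟩)) (degree_eq_coe_iff.1 hn).2

theorem add_mem_topDegrees_map_mulRight_T {U : Submodule K K[T;T⁻¹]} {n : ℤ}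
    (hn : n ∈ topDegrees U) (k : ℤ) : n + k ∈ topDegrees (U.map (mulRight K (T k))) := by
  obtain ⟨p, hp, hpn⟩ := hn
  refine ⟨p * T k, mem_map_of_mem hp, ?_⟩
  rw [degree_eq_coe_iff] at hpn ⊢
  rw [coeff_mul_T, add_sub_cancel_right, mul_T_mem_supported_iff, preimage_add_const_Iic,
    add_sub_cancel_right]
  exact hpn

theorem top_le_sup_supported_Iio {U : Submodule K K[T;T⁻¹]} {n₀ : ℤ}
    (h : Ici n₀ ⊆ topDegrees U) : ⊤ ≤ U ⊔ supported K K (Iio n₀) := by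
  have key : ∀ k : ℕ, supported K K (Iio (n₀ + k)) ≤ U ⊔ supported K K (Iio n₀) := by
    intro k
    induction k with
    | zero => simp
    | succ k ih =>
      intro p hp
      obtain ⟨v, hv, hvn⟩ := h (show n₀ + k ∈ Ici n₀ by simp)
      have hpk : p ∈ supported K K (Iic (n₀ + k)) :=
        supported_mono (fun m (hm : m < _) => show m ≤ _ by omega) hp
      rw [← sub_add_cancel p ((p.coeff (n₀ + k) / v.coeff (n₀ + k)) • v)]
      exact add_mem (ih (sub_smul_mem_supported_Iio hpk hvn)) (mem_sup_left (smul_mem _ _ hv))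
  intro p _
  obtain ⟨_, b, hp⟩ := exists_mem_supported_Icc p
  exact key (b + 1 - n₀).toNat (supported_mono (fun m hm => show m < _ by have := hm.2; omega) hp)

end Degree

end LaurentPolynomial

theorem Int.exists_Ici_subset_of_not_bddAbove {D : Set ℤ} (hD : ¬BddAbove D)
    (h : {n ∈ D | n + 1 ∉ D}.Finite) : ∃ n₀, Ici n₀ ⊆ D := by
  obtain ⟨b, hb⟩ := h.bddAbove
  obtain ⟨n₀, hn₀, hbn₀⟩ := not_bddAbove_iff.1 hD b
  refine ⟨n₀, fun n hn => ?_⟩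
  induction n, hn using Int.leInduction with
  | base => exact hn₀
  | succ n hn₀n hn =>
    by_contra hn1
    exact absurd (hb ⟨hn, hn1⟩) (by omega)

namespace LaurentPolynomial

open Submodule LinearMap

variable {K : Type*} [Field K] {A : Submodule K K[T;T⁻¹]}

theorem supported_Ici_almostLE_of_not_fg (hA : AlmostLE (A.map (mulRight K (T 1))) A)
    (hP : ¬(A ⊓ supported K K (Ici 0)).FG) : AlmostLE (supported K K (Ici 0)) A := by
  set P := supported K K (Ici (0 : ℤ))
  set U := A ⊓ P
  have hUP : U.map (mulRight K (T 1)) ≤ P := by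
    rw [map_le_iff_le_comap]
    intro p hp
    rw [mem_comap, mulRight_apply, mul_T_mem_supported_iff, preimage_add_const_Ici]
    exact supported_mono (Ici_subset_Ici.2 (by norm_num)) hp.2
  have hU : AlmostLE (U.map (mulRight K (T 1))) U :=
    ((AlmostLE.of_le (map_mono inf_le_left)).trans hA).inf_of_le hUP
  have hfin : {n ∈ topDegrees U | n + 1 ∉ topDegrees U}.Finite := by
    refine (hU.topDegrees_sdiff_finite.preimage (add_left_injective 1).injOn).subset ?_
    rintro n ⟨hn, hn1⟩
    exact ⟨add_mem_topDegrees_map_mulRight_T hn 1, hn1⟩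
  have hunb : ¬BddAbove (topDegrees U) := by
    rintro ⟨C, hC⟩
    refine hP ((fg_supported (finite_Icc 0 C)).of_le ?_)
    rw [← Ici_inter_Iic, supported_inter]
    exact le_inf inf_le_right (le_supported_Iic_of_mem_upperBounds hC)
  obtain ⟨n₀, hn₀⟩ := Int.exists_Ici_subset_of_not_bddAbove hunb hfin
  have hPU : P = U ⊔ supported K K (Ico 0 n₀) := by
    calc P = (U ⊔ supported K K (Iio n₀)) ⊓ P :=
          (inf_eq_right.2 (le_top.trans (top_le_sup_supported_Iio hn₀))).symm
      _ = U ⊔ supported K K (Iio n₀) ⊓ P := sup_inf_assoc_of_le _ inf_le_right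
      _ = U ⊔ supported K K (Ico 0 n₀) := by rw [← supported_inter, inter_comm, Ici_inter_Iio]
  exact (show AlmostLE P U from ⟨_, fg_supported (finite_Ico 0 n₀), hPU.le⟩).trans
    (.of_le inf_le_left)

theorem almostLE_supported_Iic_of_fg (hA : AlmostLE (A.map (mulRight K (T 1))) A)
    (hP : (A ⊓ supported K K (Ici 0)).FG) : AlmostLE A (supported K K (Iic 0)) := by
  obtain ⟨E, hE, hAE⟩ := hA
  obtain ⟨a, b, hEab⟩ := exists_le_supported_Icc hE
  have hF : (A ⊓ supported K K (Ici a)).FG :=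
    ((supported_almostLE (by rw [Ici_sdiff_Ici]; exact finite_Ico a 0)).inf_left A).fg hP
  obtain ⟨_, c, hFc⟩ := exists_le_supported_Icc hF
  obtain ⟨C, hbC, hcC⟩ : ∃ C, b ≤ C ∧ c ≤ C := ⟨max b c, le_max_left b c, le_max_right b c⟩
  have hEa : E ≤ supported K K (Ici a) := hEab.trans (supported_mono Icc_subset_Ici_self)
  have hEC : E ≤ supported K K (Iic C) :=
    hEab.trans (supported_mono (Icc_subset_Iic_self.trans (Iic_subset_Iic.2 hbC)))
  -- Multiplying by `x` and then subtracting an element of `E` raises the bottom of the support.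
  have key : ∀ k : ℕ, A ⊓ supported K K (Ici (a - k)) ≤ supported K K (Iic C) := by
    intro k
    induction k with
    | zero =>
      simpa using hFc.trans (supported_mono (Icc_subset_Iic_self.trans (Iic_subset_Iic.2 hcC)))
    | succ k ih =>
      rintro p ⟨hpA, hp⟩
      obtain ⟨q, hqA, e, he, hqe⟩ := mem_sup.1 (hAE (mem_map_of_mem hpA))
      rw [mulRight_apply] at hqe
      have hpT : p * T 1 ∈ supported K K (Ici (a - k)) := by
        rwa [mul_T_mem_supported_iff, preimage_add_const_Ici, sub_sub, ← Nat.cast_succ]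
      have heT : e ∈ supported K K (Ici (a - k)) :=
        supported_mono (Ici_subset_Ici.2 (by omega)) (hEa he)
      have hq : q ∈ supported K K (Ici (a - k)) := by
        rw [eq_sub_of_add_eq hqe]
        exact sub_mem hpT heT
      have hpT' : p * T 1 ∈ supported K K (Iic C) := by
        rw [← hqe]
        exact add_mem (ih ⟨hqA, hq⟩) (hEC he)
      rw [mul_T_mem_supported_iff, preimage_add_const_Iic] at hpT'
      exact supported_mono (Iic_subset_Iic.2 (by omega)) hpT'
  refine (AlmostLE.of_le fun p hp => ?_).trans
    (supported_almostLE (t := Iic 0) (by rw [Iic_sdiff_Iic]; exact finite_Ioc 0 C))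
  obtain ⟨a', _, hp'⟩ := exists_mem_supported_Icc p
  refine key (a - a').toNat ⟨hp, supported_mono ?_ hp'⟩
  exact Icc_subset_Ici_self.trans (Ici_subset_Ici.2 (by omega))

theorem supported_Iic_almostLE_of_not_fg (hA : AlmostLE (A.map (mulRight K (T (-1)))) A)
    (hQ : ¬(A ⊓ supported K K (Iic 0)).FG) : AlmostLE (supported K K (Iic 0)) A := by
  have h := supported_Ici_almostLE_of_not_fg (A := A.map invert.toLinearMap)
    (by simpa only [map_invert_map_mulRight_T, neg_neg] using hA.map invert.toLinearMap)
    (by rwa [← neg_zero, ← neg_Iic, ← map_invert_inf_supported, fg_map_iff _ invert.injective])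
  simpa only [map_invert_supported, neg_Ici, neg_zero, map_invert_map_invert] using
    h.map invert.toLinearMap

theorem almostLE_supported_Ici_of_fg (hA : AlmostLE (A.map (mulRight K (T (-1)))) A)
    (hQ : (A ⊓ supported K K (Iic 0)).FG) : AlmostLE A (supported K K (Ici 0)) := by
  have h := almostLE_supported_Iic_of_fg (A := A.map invert.toLinearMap)
    (by simpa only [map_invert_map_mulRight_T, neg_neg] using hA.map invert.toLinearMap)
    (by rwa [← neg_zero, ← neg_Iic, ← map_invert_inf_supported, fg_map_iff _ invert.injective])
  simpa only [map_invert_supported, neg_Iic, neg_zero, map_invert_map_invert] using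
    h.map invert.toLinearMap

theorem almostLE_map_mulRight_T {n : ℤ}
    (h : FiniteDimensional K (A ⧸ (A ⊓ A.map (mulRight K (T n))).comap A.subtype)) :
    AlmostLE (A.map (mulRight K (T (-n)))) A := by
  have := (almostLE_iff_finiteDimensional.2 h).map (mulRight K (T (-n)))
  rwa [← map_comp, ← mulRight_mul, ← T_add, add_neg_cancel, T_zero, mulRight_one,
    Submodule.map_id] at this

end LaurentPolynomial

/-- If `A` is a `G`-almost invariant subspace of the Laurent polynomial ring `B = K[x,x⁻¹]`
(the group algebra of the infinite cyclic group `G = ⟨x⟩`), then `A` is almost equal to one of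
`0`, `K[x]`, `K[x⁻¹]`, `B`. -/
theorem almost_invariant_subspace_of_laurent (K : Type*) [Field K]
    (A : Submodule K K[T;T⁻¹])
    (h₁ : FiniteDimensional K
      (A ⧸ (A ⊓ A.map (LinearMap.mulRight K (T 1))).comap A.subtype))
    (h₂ : FiniteDimensional K
      (A ⧸ (A ⊓ A.map (LinearMap.mulRight K (T (-1)))).comap A.subtype)) :
    AlmostEqual A ⊥ ∨
      AlmostEqual A (Submodule.span K (Set.range fun n : ℕ => (T (n : ℤ) : K[T;T⁻¹]))) ∨
      AlmostEqual A (Submodule.span K (Set.range fun n : ℕ => (T (-(n : ℤ)) : K[T;T⁻¹]))) ∨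
      AlmostEqual A ⊤ := by
  have hx : AlmostLE (A.map (LinearMap.mulRight K (T 1))) A := by
    simpa only [neg_neg] using almostLE_map_mulRight_T h₂
  have hx' : AlmostLE (A.map (LinearMap.mulRight K (T (-1)))) A := almostLE_map_mulRight_T h₁
  simp only [almostEqual_iff, span_range_T_natCast, span_range_T_neg_natCast]
  by_cases hP : (A ⊓ supported K K (Ici 0)).FG <;> by_cases hQ : (A ⊓ supported K K (Iic 0)).FG
  · refine Or.inl ⟨almostLE_of_fg ?_, .of_le bot_le⟩
    exact ((almostLE_supported_Iic_of_fg hx hP).inf_of_le le_rfl).fg (by rwa [inf_comm])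
  · exact Or.inr (Or.inr (Or.inl
      ⟨almostLE_supported_Iic_of_fg hx hP, supported_Iic_almostLE_of_not_fg hx' hQ⟩))
  · exact Or.inr (Or.inl
      ⟨almostLE_supported_Ici_of_fg hx' hQ, supported_Ici_almostLE_of_not_fg hx hP⟩)
  · refine Or.inr (Or.inr (Or.inr ⟨.of_le le_top, ?_⟩))
    rw [← supported_univ, ← Iic_union_Ici (a := (0 : ℤ)), supported_union]
    exact (supported_Iic_almostLE_of_not_fg hx' hQ).sup (supported_Ici_almostLE_of_not_fg hx hP)
end

section
/- In the lamplighter group G = 𝔽_p ≀ ℤ with base group B = ⊕_{n∈ℤ} 𝔽_p, if H is a subgroup of G containing an element of infinite order and an element of finite order other than the identity, and H is inert in G, then H has finite index in G. -/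
/-!
Let `A = H ∩ B`. An element of `H` of infinite order has a nonzero `ℤ`-component `m`, and
conjugation by it shows that `A` is invariant under `σ ^ m`, where `σ` is the shift; a nontrivial
element of `H` of finite order lies in `B`, so `A ≠ 1`. Inertness makes `A` commensurable with
every translate `σ ^ j • A`. There are at most `|m|` distinct translates, so `A` has finite index
in their join `I`, which is `σ`-invariant. Read as an `𝔽_p`-subspace of `ℤ →₀ 𝔽_p`, `I` contains
all shifts of some `c ≠ 0`; shifting `c` so that its first or last nonzero coefficient sits at `n`
expresses the basis vector at `n` modulo `I` through basis vectors nearer to the support of `c`,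
so `B / I` is spanned by finitely many of them. Hence `A` has finite index in `B`, and since the
image of `H` in `ℤ` is nonzero, `H` has finite index in `G`.
-/

/-- The base group of the lamplighter group: `⊕_{n∈ℤ} 𝔽_p`, written multiplicatively. -/
abbrev LampBase (p : ℕ) := Multiplicative (ℤ →₀ ZMod p)

/-- The shift automorphism of the base group, moving each coordinate up by one. -/
noncomputable def lampShift (p : ℕ) : MulAut (LampBase p) :=
  AddEquiv.toMultiplicative (Finsupp.domCongr (Equiv.addRight (1 : ℤ)))

/-- The lamplighter group `𝔽_p ≀ ℤ = (⊕_{n∈ℤ} 𝔽_p) ⋊ ℤ`. -/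
abbrev Lamplighter (p : ℕ) :=
  LampBase p ⋊[zpowersHom (MulAut (LampBase p)) (lampShift p)] Multiplicative ℤ

/-- The base subgroup `B = ⊕_{n∈ℤ} 𝔽_p` of the lamplighter group. -/
noncomputable def lampB (p : ℕ) : Subgroup (Lamplighter p) := SemidirectProduct.inl.range

/-- The subgroup `B⁺ = ⊕_{n≥0} 𝔽_p` of the lamplighter group. -/
noncomputable def lampBplus (p : ℕ) : Subgroup (Lamplighter p) :=
  (Subgroup.toAddSubgroup'.symm
    ((Finsupp.supported (ZMod p) (ZMod p) {n : ℤ | 0 ≤ n}).toAddSubgroup)).map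
    SemidirectProduct.inl

/-- The subgroup `B⁻ = ⊕_{n≤0} 𝔽_p` of the lamplighter group. -/
noncomputable def lampBminus (p : ℕ) : Subgroup (Lamplighter p) :=
  (Subgroup.toAddSubgroup'.symm
    ((Finsupp.supported (ZMod p) (ZMod p) {n : ℤ | n ≤ 0}).toAddSubgroup)).map
    SemidirectProduct.inl

/-- A subgroup is inert (commensurated) if it is commensurable with all its conjugates. -/
def IsInert {G : Type*} [Group G] (H : Subgroup G) : Prop :=
  ∀ g : G, Subgroup.Commensurable H (H.map (MulAut.conj g).toMonoidHom)

open Multiplicative SemidirectProduct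

theorem Function.Periodic.iSup_eq_finset_sup {α : Type*} [CompleteLattice α] {f : ℤ → α} {m : ℤ}
    (hf : Function.Periodic f m) (hm : m ≠ 0) : ⨆ j, f j = (Finset.Ico 0 |m|).sup f := by
  refine le_antisymm (iSup_le fun j => ?_) (Finset.sup_le fun j _ => le_iSup f j)
  have hj : f j = f (j % m) := by
    rw [← hf.sub_int_mul_eq (j / m), Int.cast_id, mul_comm, Int.emod_def]
  rw [hj]
  exact Finset.le_sup (Finset.mem_Ico.mpr ⟨Int.emod_nonneg j hm, Int.emod_lt_abs j hm⟩)

namespace Subgroup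

section Group

variable {G : Type*} [Group G]

theorem relIndex_normal_sup (H N : Subgroup G) [N.Normal] :
    H.relIndex (N ⊔ H) = H.relIndex N := by
  refine (Nat.card_congr (Equiv.ofBijective (quotientSubgroupOfEmbeddingOfLE H le_sup_left)
    ⟨(quotientSubgroupOfEmbeddingOfLE H le_sup_left).injective, ?_⟩)).symm
  intro q
  induction q using QuotientGroup.induction_on with | H x =>
  obtain ⟨_, hx⟩ := x
  obtain ⟨n, hn, h, hh, rfl⟩ := mem_sup_of_normal_left.mp hx
  refine ⟨((⟨n, hn⟩ : N) : N ⧸ H.subgroupOf N), QuotientGroup.eq.mpr ?_⟩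
  simpa [mem_subgroupOf] using hh

theorem index_ne_zero_of_relIndex_ker_ne_zero {Q : Type*} [Group Q] (f : G →* Q)
    {H : Subgroup G} (hker : H.relIndex f.ker ≠ 0) (hmap : (H.map f).index ≠ 0) :
    H.index ≠ 0 := by
  rw [index_map, sup_comm] at hmap
  rw [← relIndex_mul_index (le_sup_right : H ≤ f.ker ⊔ H), relIndex_normal_sup]
  exact mul_ne_zero hker (left_ne_zero_of_mul hmap)

end Group

theorem index_ne_zero_of_ofAdd_mem {K : Subgroup (Multiplicative ℤ)} {m : ℤ} (hm : m ≠ 0)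
    (hK : ofAdd m ∈ K) : K.index ≠ 0 := by
  -- `zpowers (ofAdd m)` is `zmultiples m` read through `Multiplicative`.
  have hindex : (zpowers (ofAdd m)).index = m.natAbs := Int.index_zmultiples m
  intro h
  have hdvd := index_dvd_of_le ((zpowers_le (G := Multiplicative ℤ)).mpr hK)
  rw [h, zero_dvd_iff, hindex, Int.natAbs_eq_zero] at hdvd
  exact hm hdvd

section CommGroup

variable {B : Type*} [CommGroup B]

theorem relIndex_sup_ne_zero {A K L : Subgroup B} (hK : A.relIndex K ≠ 0)
    (hL : A.relIndex L ≠ 0) : A.relIndex (K ⊔ L) ≠ 0 := by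
  have hAK : A.relIndex (A ⊔ K) ≠ 0 := by rwa [relIndex_sup_left]
  have hAKL : (A ⊔ K).relIndex (A ⊔ K ⊔ L) ≠ 0 := by
    rw [relIndex_sup_left]
    exact fun h => hL (relIndex_eq_zero_of_le_left le_sup_left h)
  have hle : K ⊔ L ≤ A ⊔ K ⊔ L := sup_le_sup_right le_sup_right L
  exact fun h => relIndex_ne_zero_trans hAK hAKL (relIndex_eq_zero_of_le_right hle h)

theorem relIndex_finset_sup_ne_zero {ι : Type*} {A : Subgroup B} {s : Finset ι}
    {K : ι → Subgroup B} (h : ∀ i ∈ s, A.relIndex (K i) ≠ 0) : A.relIndex (s.sup K) ≠ 0 :=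
  Finset.sup_induction (p := fun K => A.relIndex K ≠ 0) (by simp [relIndex_bot_right])
    (fun _ h₁ _ h₂ => relIndex_sup_ne_zero h₁ h₂) h

variable (σ : MulAut B) (A : Subgroup B)

theorem map_map_zpow (i j : ℤ) :
    (A.map (σ ^ i).toMonoidHom).map (σ ^ j).toMonoidHom = A.map (σ ^ (j + i)).toMonoidHom := by
  rw [map_map, zpow_add]
  rfl

theorem le_iSup_map_zpow : A ≤ ⨆ i : ℤ, A.map (σ ^ i).toMonoidHom :=
  fun b hb => mem_iSup_of_mem 0 ⟨b, hb, by simp⟩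

theorem zpow_apply_mem_iSup_map_zpow {b : B} (hb : b ∈ ⨆ i : ℤ, A.map (σ ^ i).toMonoidHom)
    (j : ℤ) : (σ ^ j) b ∈ ⨆ i : ℤ, A.map (σ ^ i).toMonoidHom := by
  have hle : (⨆ i : ℤ, A.map (σ ^ i).toMonoidHom).map (σ ^ j).toMonoidHom ≤
      ⨆ i : ℤ, A.map (σ ^ i).toMonoidHom := by
    rw [map_iSup]
    exact iSup_le fun i => (map_map_zpow σ A i j).le.trans
      (le_iSup (fun i : ℤ => A.map (σ ^ i).toMonoidHom) (j + i))
  exact hle (mem_map_of_mem _ hb)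

theorem relIndex_iSup_map_zpow_ne_zero {m : ℤ} (hm : m ≠ 0)
    (hper : A.map (σ ^ m).toMonoidHom = A)
    (hcomm : ∀ j : ℤ, A.relIndex (A.map (σ ^ j).toMonoidHom) ≠ 0) :
    A.relIndex (⨆ j : ℤ, A.map (σ ^ j).toMonoidHom) ≠ 0 := by
  have hperiodic : Function.Periodic (fun j : ℤ => A.map (σ ^ j).toMonoidHom) m := fun j =>
    (map_map_zpow σ A m j).symm.trans (by rw [hper])
  rw [hperiodic.iSup_eq_finset_sup hm]
  exact relIndex_finset_sup_ne_zero fun j _ => hcomm j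

end CommGroup

end Subgroup

namespace SemidirectProduct

variable {N G : Type*} [Group G]

section Group

variable [Group N] {φ : G →* MulAut N}

theorem comap_inl_map_conj_inr (H : Subgroup (N ⋊[φ] G)) (g : G) :
    (H.map (MulAut.conj (inr g)).toMonoidHom).comap inl = (H.comap inl).map (φ g).toMonoidHom := by
  ext n
  rw [Subgroup.mem_comap, Subgroup.mem_map_equiv, Subgroup.mem_map_equiv, Subgroup.mem_comap,
    MulAut.conj_symm_apply, ← map_inv, ← inl_aut_inv]
  rfl

theorem mem_range_inl_of_isOfFinOrder [IsMulTorsionFree G] {g : N ⋊[φ] G}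
    (hg : IsOfFinOrder g) : g ∈ (inl : N →* N ⋊[φ] G).range := by
  rw [range_inl_eq_ker_rightHom]
  exact (rightHom.isOfFinOrder hg).eq_one'

theorem isOfFinOrder_of_right_eq_one (hN : IsMulTorsion N) {g : N ⋊[φ] G}
    (hg : g.right = 1) : IsOfFinOrder g := by
  rw [← inl_left_mul_inr_right g, hg, map_one, mul_one]
  exact inl.isOfFinOrder (hN g.left)

end Group

variable [CommGroup N] {φ : G →* MulAut N}

theorem mul_inl_mul_inv (g : N ⋊[φ] G) (n : N) : g * inl n * g⁻¹ = inl (φ g.right n) := by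
  ext <;> simp [mul_comm]

theorem map_comap_inl_le {H : Subgroup (N ⋊[φ] G)} {g : N ⋊[φ] G} (hg : g ∈ H) :
    (H.comap inl).map (φ g.right).toMonoidHom ≤ H.comap inl := by
  rintro _ ⟨n, hn, rfl⟩
  rw [Subgroup.mem_comap, MulEquiv.coe_toMonoidHom, ← mul_inl_mul_inv]
  exact H.mul_mem (H.mul_mem hg hn) (H.inv_mem hg)

theorem map_comap_inl_eq {H : Subgroup (N ⋊[φ] G)} {g : N ⋊[φ] G} (hg : g ∈ H) :
    (H.comap inl).map (φ g.right).toMonoidHom = H.comap inl := by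
  refine le_antisymm (map_comap_inl_le hg) fun n hn => ⟨φ g.right⁻¹ n, ?_, ?_⟩
  · simpa using map_comap_inl_le (H.inv_mem hg) ⟨n, hn, rfl⟩
  · simp

end SemidirectProduct

namespace Finsupp

theorem domCongr_addRight_apply {M : Type*} [AddCommMonoid M] (j : ℤ) (f : ℤ →₀ M) (i : ℤ) :
    Finsupp.domCongr (Equiv.addRight j) f i = f (i - j) := by
  simp [domCongr_apply, equivMapDomain_apply, sub_eq_add_neg]

theorem domCongr_addRight_zero {M : Type*} [AddCommMonoid M] (f : ℤ →₀ M) :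
    Finsupp.domCongr (Equiv.addRight 0) f = f :=
  Finsupp.ext fun n => by rw [domCongr_addRight_apply, sub_zero]

theorem domCongr_addRight_domCongr_addRight {M : Type*} [AddCommMonoid M] (i j : ℤ)
    (f : ℤ →₀ M) :
    Finsupp.domCongr (Equiv.addRight i) (Finsupp.domCongr (Equiv.addRight j) f) =
      Finsupp.domCongr (Equiv.addRight (i + j)) f :=
  Finsupp.ext fun n => by simp only [domCongr_addRight_apply, sub_sub]

variable {K : Type*} [Field K]

theorem single_one_mem_of_mem {ι : Type*} {V : Submodule K (ι →₀ K)} {c : ι →₀ K} {n : ι}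
    (hc : c ∈ V) (hn : c n ≠ 0) (h : ∀ i ∈ c.support, i ≠ n → single i 1 ∈ V) :
    single n 1 ∈ V := by
  classical
  have hsum : c n • single n 1 + ∑ i ∈ c.support.erase n, c i • single i 1 = c := by
    rw [Finset.add_sum_erase _ (fun i => c i • single i (1 : K)) (mem_support_iff.mpr hn)]
    simpa only [smul_single_one, Finsupp.sum] using c.sum_single
  rw [← V.smul_mem_iff hn, ← add_sub_cancel_right (c n • single n 1), hsum]
  refine V.sub_mem hc (V.sum_mem fun i hi => V.smul_mem _ (h i ?_ ?_))
  · exact Finset.mem_of_mem_erase hi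
  · exact Finset.ne_of_mem_erase hi

theorem single_one_mem_sup_supported {V : Submodule K (ℤ →₀ K)}
    (hV : ∀ j : ℤ, ∀ f ∈ V, Finsupp.domCongr (Equiv.addRight j) f ∈ V)
    {c : ℤ →₀ K} (hc : c ∈ V) {l d : ℤ} (hl : c l ≠ 0) (hd : c d ≠ 0)
    (hsupp : ∀ i ∈ c.support, l ≤ i ∧ i ≤ d) (n : ℤ) :
    single n 1 ∈ V ⊔ supported K K (Set.Ico l d) := by
  set U := V ⊔ supported K K (Set.Ico l d)
  have hshift : ∀ j : ℤ, Finsupp.domCongr (Equiv.addRight j) c ∈ U :=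
    fun j => Submodule.mem_sup_left (hV j c hc)
  suffices h : ∀ k : ℕ, ∀ n ∈ Set.Ico (l - k) (d + k), single n (1 : K) ∈ U from
    h ((l - n).toNat + (n - d).toNat + 1) n (by constructor <;> omega)
  intro k
  induction k with
  | zero =>
    intro n hn
    exact Submodule.mem_sup_right (single_mem_supported K 1 (by simpa using hn))
  | succ k ih =>
    intro n ⟨hn₁, hn₂⟩
    push_cast at hn₁ hn₂
    by_cases hlow : n = l - (k + 1)
    · refine single_one_mem_of_mem (hshift (-(k + 1))) ?_ fun i hi hin => ih i ?_
      · rwa [domCongr_addRight_apply, hlow, sub_neg_eq_add, sub_add_cancel]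
      · rw [mem_support_iff, domCongr_addRight_apply] at hi
        have := hsupp _ (mem_support_iff.mpr hi)
        constructor <;> omega
    by_cases hhigh : n = d + k
    · refine single_one_mem_of_mem (hshift k) ?_ fun i hi hin => ih i ?_
      · rwa [domCongr_addRight_apply, hhigh, add_sub_cancel_right]
      · rw [mem_support_iff, domCongr_addRight_apply] at hi
        have := hsupp _ (mem_support_iff.mpr hi)
        constructor <;> omega
    exact ih n ⟨by omega, by omega⟩

theorem finite_quotient_of_shift_invariant {V : Submodule K (ℤ →₀ K)}
    (hV : ∀ j : ℤ, ∀ f ∈ V, Finsupp.domCongr (Equiv.addRight j) f ∈ V)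
    {c : ℤ →₀ K} (hc : c ∈ V) (hc0 : c ≠ 0) : Module.Finite K ((ℤ →₀ K) ⧸ V) := by
  have hne : c.support.Nonempty := support_nonempty_iff.mpr hc0
  set l := c.support.min' hne
  set d := c.support.max' hne
  have hsup : V ⊔ supported K K (Set.Ico l d) = ⊤ := by
    rw [eq_top_iff, ← supported_univ, supported_eq_span_single, Submodule.span_le]
    rintro _ ⟨n, -, rfl⟩
    exact single_one_mem_sup_supported hV hc (mem_support_iff.mp (c.support.min'_mem hne))
      (mem_support_iff.mp (c.support.max'_mem hne))
      (fun i hi => ⟨c.support.min'_le i hi, c.support.le_max' i hi⟩) n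
  have : Finite (Set.Ico l d) := (Set.finite_Ico l d).to_subtype
  have : Module.Finite K (supported K K (Set.Ico l d)) :=
    Module.Finite.equiv (supportedEquivFinsupp _).symm
  rw [Module.finite_def, ← (Submodule.map_mkQ_eq_top _ _).mpr hsup]
  exact (Module.Finite.iff_fg.mp this).map _

end Finsupp

theorem lampBase_isTorsion (p : ℕ) [NeZero p] : IsMulTorsion (LampBase p) := fun b => by
  refine isOfFinOrder_iff_pow_eq_one.mpr ⟨p, Nat.pos_of_neZero p, ?_⟩
  rw [← ofAdd_toAdd b, ← ofAdd_nsmul, ← ofAdd_zero]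
  congr 1
  ext n
  simp

theorem lampShift_zpow_ofAdd (p : ℕ) (j : ℤ) (f : ℤ →₀ ZMod p) :
    (lampShift p ^ j) (ofAdd f) = ofAdd (Finsupp.domCongr (Equiv.addRight j) f) := by
  have hσ : ∀ g, lampShift p (ofAdd g) = ofAdd (Finsupp.domCongr (Equiv.addRight 1) g) :=
    fun _ => rfl
  induction j using Int.induction_on generalizing f with
  | zero => rw [zpow_zero, MulAut.one_apply, Finsupp.domCongr_addRight_zero]
  | succ k ih =>
    rw [zpow_add_one, MulAut.mul_apply, hσ, ih, Finsupp.domCongr_addRight_domCongr_addRight]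
  | pred k ih =>
    have hσinv : (lampShift p)⁻¹ (ofAdd f) = ofAdd (Finsupp.domCongr (Equiv.addRight (-1)) f) := by
      rw [MulAut.inv_def, MulEquiv.symm_apply_eq, hσ, Finsupp.domCongr_addRight_domCongr_addRight,
        add_neg_cancel, Finsupp.domCongr_addRight_zero]
    rw [zpow_sub_one, MulAut.mul_apply, hσinv, ih, Finsupp.domCongr_addRight_domCongr_addRight,
      sub_eq_add_neg]

theorem index_ne_zero_of_lampShift_invariant {p : ℕ} [Fact p.Prime] {I : Subgroup (LampBase p)}
    (hI : ∀ j : ℤ, ∀ b ∈ I, (lampShift p ^ j) b ∈ I) {b : LampBase p} (hb : b ∈ I) (hb1 : b ≠ 1) :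
    I.index ≠ 0 := by
  -- `I` read as an `𝔽_p`-subspace; `f ∈ V ↔ ofAdd f ∈ I` and the two quotients agree by `rfl`.
  let V := AddSubgroup.toZModSubmodule p (Subgroup.toAddSubgroup' I)
  have : Module.Finite (ZMod p) ((ℤ →₀ ZMod p) ⧸ V) :=
    Finsupp.finite_quotient_of_shift_invariant
      (fun j f hf => lampShift_zpow_ofAdd p j f ▸ hI j (ofAdd f) hf) (c := toAdd b) hb hb1
  have : Finite ((ℤ →₀ ZMod p) ⧸ V) := Module.finite_of_finite (ZMod p)
  exact Subgroup.index_ne_zero_of_finite (hH := this)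

theorem lampBase_index_ne_zero_of_commensurable {p : ℕ} [Fact p.Prime]
    {A : Subgroup (LampBase p)} {m : ℤ} (hm : m ≠ 0)
    (hper : A.map (lampShift p ^ m).toMonoidHom = A)
    (hcomm : ∀ j : ℤ, A.relIndex (A.map (lampShift p ^ j).toMonoidHom) ≠ 0)
    {b : LampBase p} (hb : b ∈ A) (hb1 : b ≠ 1) : A.index ≠ 0 := by
  set I := ⨆ j : ℤ, A.map (lampShift p ^ j).toMonoidHom
  have hAI : A ≤ I := Subgroup.le_iSup_map_zpow _ A
  rw [← Subgroup.relIndex_mul_index hAI]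
  refine mul_ne_zero (A.relIndex_iSup_map_zpow_ne_zero _ hm hper hcomm) ?_
  exact index_ne_zero_of_lampShift_invariant
    (fun j _ hb => Subgroup.zpow_apply_mem_iSup_map_zpow _ A hb j) (hAI hb) hb1

/-- If an inert subgroup of the lamplighter group contains an element of infinite order and a
nontrivial element of finite order, then it has finite index. -/
theorem lamplighter_inert_mixed_finite_index (p : ℕ) [Fact p.Prime]
    (H : Subgroup (Lamplighter p))
    (h₁ : ∃ h ∈ H, ¬ IsOfFinOrder h)
    (h₂ : ∃ h ∈ H, h ≠ 1 ∧ IsOfFinOrder h)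
    (hH : IsInert H) : H.index ≠ 0 := by
  obtain ⟨g, hgH, hg⟩ := h₁
  obtain ⟨t, htH, ht1, ht⟩ := h₂
  have hm : toAdd g.right ≠ 0 := fun h =>
    hg (isOfFinOrder_of_right_eq_one (lampBase_isTorsion p) (toAdd_eq_zero.mp h))
  obtain ⟨b, rfl⟩ := mem_range_inl_of_isOfFinOrder ht
  have hA : (H.comap inl).index ≠ 0 := by
    refine lampBase_index_ne_zero_of_commensurable hm ?_ (fun j => ?_) htH
      fun hb => ht1 (by rw [hb, map_one])
    · simpa [zpowersHom_apply] using map_comap_inl_eq hgH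
    · have := Subgroup.relIndex_comap_ne_zero inl (hH (inr (ofAdd j))).1
      rwa [comap_inl_map_conj_inr, zpowersHom_apply, toAdd_ofAdd] at this
  refine Subgroup.index_ne_zero_of_relIndex_ker_ne_zero rightHom ?_
    (Subgroup.index_ne_zero_of_ofAdd_mem hm (Subgroup.mem_map_of_mem rightHom hgH))
  rwa [← range_inl_eq_ker_rightHom, ← Subgroup.index_comap]
end

section
/- In the lamplighter group G = 𝔽_p ≀ ℤ, no infinite cyclic subgroup is inert. Concretely, if h ∈ G has infinite order, then ⟨h⟩ is not a commensurated (inert) subgroup of G. -/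
/-! If `h` has infinite order, its image `k` in `ℤ` is nonzero, because the base group has
exponent `p`. Conjugation by the lamp `δ₀` does not change the `ℤ`-coordinate, so an element of
`⟨h⟩ ∩ δ₀⟨h⟩δ₀⁻¹` is a power `hⁿ` commuting with `δ₀`; but `hⁿδ₀h⁻ⁿ = δ_{nk}`, forcing `n = 0`.
A trivial intersection has infinite index in the infinite group `⟨h⟩`. -/

open SemidirectProduct Subgroup

theorem Subgroup.not_commensurable_of_inf_eq_bot {G : Type*} [Group G] {H K : Subgroup G}
    [Infinite H] (hHK : H ⊓ K = ⊥) : ¬ H.Commensurable K := fun hc =>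
  hc.2 (by rw [← inf_relIndex_left, hHK, relIndex_bot_left, Nat.card_eq_zero_of_infinite])

theorem SemidirectProduct.mul_inl_mul_inv_s6 {N G : Type*} [CommGroup N] [Group G]
    {φ : G →* MulAut N} (x : N ⋊[φ] G) (n : N) : x * inl n * x⁻¹ = inl (φ x.right n) := by
  ext <;> simp [mul_comm]

theorem lampBase_pow_self (p : ℕ) (b : LampBase p) : b ^ p = 1 := by
  ext; simp

theorem isOfFinOrder_inl (p : ℕ) [NeZero p] (b : LampBase p) :
    IsOfFinOrder (inl b : Lamplighter p) :=
  isOfFinOrder_iff_pow_eq_one.2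
    ⟨p, Nat.pos_of_neZero p, by rw [← map_pow, lampBase_pow_self, map_one]⟩

theorem right_ne_one_of_not_isOfFinOrder (p : ℕ) [NeZero p] {x : Lamplighter p}
    (hx : ¬ IsOfFinOrder x) : x.right ≠ 1 := by
  intro hr
  apply hx
  rw [← inl_left_mul_inr_right x, hr, map_one, mul_one]
  exact isOfFinOrder_inl p x.left

theorem lampShift_single (p : ℕ) (a : ℤ) (v : ZMod p) :
    lampShift p (.ofAdd (.single a v)) = .ofAdd (.single (a + 1) v) := by
  simp [lampShift]

theorem lampShift_zpow_single (p : ℕ) (m a : ℤ) (v : ZMod p) :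
    (lampShift p ^ m) (.ofAdd (.single a v)) = .ofAdd (.single (a + m) v) := by
  induction m using Int.induction_on generalizing a with
  | zero => simp
  | succ n ih => rw [zpow_add_one, MulAut.mul_apply, lampShift_single, ih]; ring_nf
  | pred n ih =>
    have shift_inv : (lampShift p)⁻¹ (.ofAdd (.single a v)) = .ofAdd (.single (a - 1) v) := by
      rw [MulAut.inv_apply, MulEquiv.symm_apply_eq, lampShift_single, sub_add_cancel]
    rw [zpow_sub_one, MulAut.mul_apply, shift_inv, ih]; ring_nf

noncomputable def lampAtZero (p : ℕ) : Lamplighter p := inl (.ofAdd (.single 0 1))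

theorem right_eq_one_of_commute_lampAtZero (p : ℕ) [Nontrivial (ZMod p)] {x : Lamplighter p}
    (hx : Commute x (lampAtZero p)) : x.right = 1 := by
  have hconj : x * lampAtZero p * x⁻¹ = lampAtZero p := by rw [hx.eq, mul_inv_cancel_right]
  rw [lampAtZero, mul_inl_mul_inv_s6, zpowersHom_apply, lampShift_zpow_single, zero_add] at hconj
  have hsingle := Multiplicative.ofAdd.injective (inl_injective hconj)
  exact toAdd_eq_zero.1 ((Finsupp.single_left_inj one_ne_zero).1 hsingle)

theorem zpowers_inf_map_conj_lampAtZero_eq_bot (p : ℕ) [Nontrivial (ZMod p)]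
    {h : Lamplighter p} (hr : h.right ≠ 1) :
    zpowers h ⊓ (zpowers h).map (MulAut.conj (lampAtZero p)).toMonoidHom = ⊥ := by
  have zpow_right_inj := injective_zpow_iff_not_isOfFinOrder.2
    (not_isOfFinOrder_of_isMulTorsionFree hr)
  have right_zpow (k : ℤ) : (h ^ k).right = h.right ^ k := map_zpow rightHom h k
  rw [eq_bot_iff]
  rintro _ ⟨⟨n, rfl⟩, _, ⟨m, rfl⟩, hmn⟩
  change lampAtZero p * h ^ m * (lampAtZero p)⁻¹ = h ^ n at hmn
  obtain rfl : m = n :=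
    zpow_right_inj (by simpa [lampAtZero, right_zpow] using congrArg rightHom hmn)
  have hcomm : Commute (h ^ m) (lampAtZero p) := eq_mul_inv_iff_mul_eq.1 hmn.symm
  have hm : h.right ^ m = h.right ^ (0 : ℤ) := by
    rw [← right_zpow, right_eq_one_of_commute_lampAtZero p hcomm, zpow_zero]
  simp [zpow_right_inj hm]

/-- No infinite cyclic subgroup of the lamplighter group is inert (commensurated). -/
theorem lamplighter_infinite_cyclic_not_inert (p : ℕ) [Fact p.Prime]
    (h : Lamplighter p) (hh : ¬ IsOfFinOrder h) :
    ¬ IsInert (Subgroup.zpowers h) := by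
  have : Infinite (zpowers h) := (infinite_zpowers.2 hh).to_subtype
  intro hinert
  exact not_commensurable_of_inf_eq_bot
    (zpowers_inf_map_conj_lampAtZero_eq_bot p (right_ne_one_of_not_isOfFinOrder p hh))
    (hinert (lampAtZero p))
end

section
/- Let φ : H → G be a group homomorphism with dense image into a topological group G, and let U be a compact open subgroup of G. Then φ⁻¹(U) is a commensurated (inert) subgroup of H, i.e., for every h ∈ H the subgroup φ⁻¹(U) ∩ (φ⁻¹(U))^h has finite index in both φ⁻¹(U) and (φ⁻¹(U))^h. -/
/-!
Conjugation by `h` carries `φ⁻¹(U)` to `φ⁻¹(U')`, where `U' = φ(h) U φ(h)⁻¹` is again a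
compact open subgroup. Two compact open subgroups are commensurable, since an open subgroup of
a compact group has finite index, and commensurability is preserved under preimages.
-/

def Commensurate {G : Type*} [Group G] (H K : Subgroup G) : Prop :=
  ((H ⊓ K).subgroupOf H).index ≠ 0 ∧ ((H ⊓ K).subgroupOf K).index ≠ 0

theorem commensurate_iff_commensurable {G : Type*} [Group G] {H K : Subgroup G} :
    Commensurate H K ↔ H.Commensurable K := by
  rw [Commensurate, Subgroup.Commensurable, ← Subgroup.relIndex, ← Subgroup.relIndex,
    Subgroup.inf_relIndex_left, Subgroup.inf_relIndex_right, and_comm]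

theorem Subgroup.Commensurable.comap {G G' : Type*} [Group G] [Group G'] {H K : Subgroup G'}
    (h : H.Commensurable K) (f : G →* G') : (H.comap f).Commensurable (K.comap f) :=
  ⟨relIndex_comap_ne_zero f h.1, relIndex_comap_ne_zero f h.2⟩

theorem Subgroup.map_conj_comap {G G' : Type*} [Group G] [Group G'] (f : G →* G')
    (K : Subgroup G') (g : G) :
    (K.comap f).map (MulAut.conj g).toMonoidHom =
      (K.map (MulAut.conj (f g)).toMonoidHom).comap f := by
  ext x
  simp only [Subgroup.mem_map_equiv, Subgroup.mem_comap, MulAut.conj_symm_apply, map_mul, map_inv]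

theorem Subgroup.coe_map_conj {G : Type*} [Group G] (U : Subgroup G) (g : G) :
    (U.map (MulAut.conj g).toMonoidHom : Set G) = (ConjAct.toConjAct g • ·) '' U := by
  rw [Subgroup.coe_map]
  rfl

section Topological

variable {G : Type*} [Group G] [TopologicalSpace G]

theorem Subgroup.relIndex_ne_zero_of_isCompact_of_isOpen [SeparatelyContinuousMul G]
    {U V : Subgroup G} (hU : IsCompact (U : Set G)) (hV : IsOpen (V : Set G)) :
    V.relIndex U ≠ 0 := by
  have : CompactSpace U := isCompact_iff_compactSpace.mp hU
  have : SeparatelyContinuousMul U := inferInstanceAs (SeparatelyContinuousMul U.toSubmonoid)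
  have : Finite (U ⧸ V.subgroupOf U) :=
    quotient_finite_of_isOpen _ (hV.preimage continuous_subtype_val)
  exact index_ne_zero_of_finite

theorem Subgroup.commensurable_of_isCompact_of_isOpen [SeparatelyContinuousMul G]
    {U V : Subgroup G} (hUc : IsCompact (U : Set G)) (hUo : IsOpen (U : Set G))
    (hVc : IsCompact (V : Set G)) (hVo : IsOpen (V : Set G)) : U.Commensurable V :=
  ⟨relIndex_ne_zero_of_isCompact_of_isOpen hVc hUo,
    relIndex_ne_zero_of_isCompact_of_isOpen hUc hVo⟩

theorem Subgroup.isCompact_map_conj [SeparatelyContinuousMul G] {U : Subgroup G}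
    (hU : IsCompact (U : Set G)) (g : G) :
    IsCompact (U.map (MulAut.conj g).toMonoidHom : Set G) := by
  rw [coe_map_conj]
  exact hU.image (continuous_const_smul _)

theorem Subgroup.isOpen_map_conj [SeparatelyContinuousMul G] {U : Subgroup G}
    (hU : IsOpen (U : Set G)) (g : G) : IsOpen (U.map (MulAut.conj g).toMonoidHom : Set G) := by
  rw [coe_map_conj]
  exact isOpenMap_smul _ _ hU

end Topological

theorem preimage_compact_open_commensurated_general {H G : Type*} [Group H] [Group G]
    [TopologicalSpace G] [IsTopologicalGroup G] (φ : H →* G)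
    (U : Subgroup G) (hUc : IsCompact (U : Set G)) (hUo : IsOpen (U : Set G)) :
    ∀ h : H, Commensurate (U.comap φ)
      ((U.comap φ).map (MulAut.conj h).toMonoidHom) := by
  intro h
  rw [Subgroup.map_conj_comap, commensurate_iff_commensurable]
  exact (Subgroup.commensurable_of_isCompact_of_isOpen hUc hUo (U.isCompact_map_conj hUc (φ h))
    (U.isOpen_map_conj hUo (φ h))).comap φ

/-- If `φ : H → G` is a homomorphism with dense image into a topological group `G` and `U` is
a compact open subgroup of `G`, then `φ⁻¹(U)` is a commensurated (inert) subgroup of `H`. -/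
theorem preimage_compact_open_commensurated {H G : Type*} [Group H] [Group G]
    [TopologicalSpace G] [IsTopologicalGroup G] (φ : H →* G) (hφ : DenseRange φ)
    (U : Subgroup G) (hUc : IsCompact (U : Set G)) (hUo : IsOpen (U : Set G)) :
    ∀ h : H, Commensurate (U.comap φ)
      ((U.comap φ).map (MulAut.conj h).toMonoidHom) :=
  preimage_compact_open_commensurated_general φ U hUc hUo
end
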